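/- arXiv:2511.01901 — 3 statements merged into one kernel-verified Lean document; each statement's English description precedes it below -/
import Mathlib

section
/- Let D ∈ C(0,ε) be positive with 1/√D integrable at 0, and let j > 0, α, β ∈ ℝ. Then there exists a unique pair (u,v) ∈ (C¹[0,ε) ∩ C²(0,ε))² solving u'' = j·u/√D, u(0)=1, u'(0)=α and v'' = j·v/√D, v(0)=0, v'(0)=β; equivalently, (u,v) is the unique continuous solution of the Volterra integral equations u(x) = 1 + αx + j∫₀^x (x−s)u(s)/√D(s) ds and v(x) = βx + j∫₀^x (x−s)v(s)/√D(s) ds. -/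
/-!
The Volterra operator `w ↦ a₀ + a₁ x + j ∫₀ˣ (x - t) w(t) g(t) dt` on `C([0, b])`, here with
`g = 1 / √D`, is not necessarily a contraction. With `G x = ∫₀ˣ |g|`, however, its `n`-th iterate
is Lipschitz with constant `(|j| b G(b))ⁿ / n!`, because `∫₀ˣ G(t)ⁿ |g(t)| dt = G(x)ⁿ⁺¹ / (n + 1)`.
Some iterate is therefore a contraction, and the Banach fixed point theorem gives a unique solution
on every `[0, b]` with `b < ε`. By uniqueness these solutions agree on their common domains, so
they glue to the unique solution on `[0, ε)`.
-/

open Set MeasureTheory intervalIntegral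

section Integral

variable {g f : ℝ → ℝ} {x : ℝ}

theorem integral_primitive_pow_mul (hx : 0 ≤ x)
    (hg : IntervalIntegrable g volume 0 x) (hgc : ContinuousOn g (Ioo 0 x)) (n : ℕ) :
    ∫ t in (0 : ℝ)..x, (∫ s in (0 : ℝ)..t, g s) ^ n * g t =
      (∫ s in (0 : ℝ)..x, g s) ^ (n + 1) / (n + 1) := by
  set G := fun t => ∫ s in (0 : ℝ)..t, g s
  have hGc : ContinuousOn G (Icc 0 x) := by
    simpa only [uIcc_of_le hx] using continuousOn_primitive_interval' hg left_mem_uIcc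
  have hG' : ∀ t ∈ Ioo 0 x, HasDerivAt G (g t) t := fun t ht =>
    integral_hasDerivAt_right
      (hg.mono_set (uIcc_subset_uIcc_left (uIcc_of_le hx ▸ Ioo_subset_Icc_self ht)))
      (hgc.stronglyMeasurableAtFilter isOpen_Ioo t ht) (hgc.continuousAt (Ioo_mem_nhds ht.1 ht.2))
  have hpow : ∀ t ∈ Ioo 0 x,
      HasDerivAt (fun t => G t ^ (n + 1) / (n + 1)) (G t ^ n * g t) t := fun t ht => by
    refine (((hG' t ht).fun_pow (n + 1)).div_const ((n : ℝ) + 1)).congr_deriv ?_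
    push_cast
    field_simp
  rw [integral_eq_sub_of_hasDerivAt_of_le hx ((hGc.pow (n + 1)).div_const _) hpow
    (hg.continuousOn_mul (by simpa only [uIcc_of_le hx] using hGc.fun_pow n))]
  simp [G]

noncomputable def volterraIntegral (g f : ℝ → ℝ) (x : ℝ) : ℝ :=
  ∫ t in (0 : ℝ)..x, (x - t) * f t * g t

theorem intervalIntegrable_volterraIntegrand (hg : IntervalIntegrable g volume 0 x)
    (hf : ContinuousOn f (uIcc 0 x)) :
    IntervalIntegrable (fun t => (x - t) * f t * g t) volume 0 x :=
  hg.continuousOn_mul ((continuousOn_const.sub continuousOn_id).mul hf)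

theorem abs_volterraIntegral_le {C : ℝ} {n : ℕ} (hx : 0 ≤ x)
    (hg : IntervalIntegrable g volume 0 x) (hgc : ContinuousOn g (Ioo 0 x))
    (hf : ContinuousOn f (Icc 0 x))
    (hfC : ∀ t ∈ Icc 0 x, |f t| ≤ C * (∫ s in (0 : ℝ)..t, |g s|) ^ n / n.factorial) :
    |volterraIntegral g f x| ≤
      x * C * (∫ s in (0 : ℝ)..x, |g s|) ^ (n + 1) / (n + 1).factorial := by
  set G := fun t => ∫ s in (0 : ℝ)..t, |g s|
  have hpt : ∀ t ∈ Icc 0 x,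
      |(x - t) * f t * g t| ≤ x * C / n.factorial * (G t ^ n * |g t|) := fun t ht => by
    rw [abs_mul, abs_mul, abs_of_nonneg (sub_nonneg.2 ht.2)]
    calc (x - t) * |f t| * |g t| ≤ x * (C * G t ^ n / n.factorial) * |g t| := by
          gcongr
          · linarith [ht.1]
          · exact hfC t ht
      _ = x * C / n.factorial * (G t ^ n * |g t|) := by ring
  have hGint : IntervalIntegrable (fun t => G t ^ n * |g t|) volume 0 x :=
    hg.abs.continuousOn_mul (by
      simpa only [uIcc_of_le hx] using
        (continuousOn_primitive_interval' hg.abs left_mem_uIcc).fun_pow n)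
  calc |volterraIntegral g f x|
      ≤ ∫ t in (0 : ℝ)..x, |(x - t) * f t * g t| := abs_integral_le_integral_abs hx
    _ ≤ ∫ t in (0 : ℝ)..x, x * C / n.factorial * (G t ^ n * |g t|) :=
        integral_mono_on hx (intervalIntegrable_volterraIntegrand hg (uIcc_of_le hx ▸ hf)).abs
          (hGint.const_mul _) hpt
    _ = x * C / n.factorial * (G x ^ (n + 1) / (n + 1)) := by
        rw [intervalIntegral.integral_const_mul, integral_primitive_pow_mul hx hg.abs hgc.abs]
    _ = x * C * G x ^ (n + 1) / (n + 1).factorial := by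
        rw [Nat.factorial_succ]
        push_cast
        field_simp

theorem volterraIntegral_sub {f₁ f₂ : ℝ → ℝ} (hg : IntervalIntegrable g volume 0 x)
    (hf₁ : ContinuousOn f₁ (uIcc 0 x)) (hf₂ : ContinuousOn f₂ (uIcc 0 x)) :
    volterraIntegral g (f₁ - f₂) x = volterraIntegral g f₁ x - volterraIntegral g f₂ x := by
  rw [volterraIntegral, volterraIntegral, volterraIntegral, ← integral_sub
    (intervalIntegrable_volterraIntegrand hg hf₁) (intervalIntegrable_volterraIntegrand hg hf₂)]
  congr 1 with t
  simp only [Pi.sub_apply]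
  ring

theorem continuousOn_volterraIntegral {b : ℝ} (hb : 0 ≤ b)
    (hg : IntervalIntegrable g volume 0 b) (hf : ContinuousOn f (Icc 0 b)) :
    ContinuousOn (volterraIntegral g f) (Icc 0 b) := by
  rw [← uIcc_of_le hb] at hf ⊢
  have hfg : IntervalIntegrable (fun t => f t * g t) volume 0 b := hg.continuousOn_mul hf
  have htfg : IntervalIntegrable (fun t => t * f t * g t) volume 0 b :=
    hg.continuousOn_mul (continuousOn_id.mul hf)
  refine ((continuousOn_id.mul (continuousOn_primitive_interval' hfg left_mem_uIcc)).sub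
    (continuousOn_primitive_interval' htfg left_mem_uIcc)).congr fun x hx => ?_
  have hsub : uIcc 0 x ⊆ uIcc 0 b := uIcc_subset_uIcc_left hx
  rw [volterraIntegral, Pi.sub_apply, Pi.mul_apply, id_eq, ← intervalIntegral.integral_const_mul,
    ← integral_sub ((hfg.mono_set hsub).const_mul x) (htfg.mono_set hsub)]
  congr 1 with t
  ring

def IsVolterraSolutionOn (g : ℝ → ℝ) (a₀ a₁ j : ℝ) (s : Set ℝ) (w : ℝ → ℝ) : Prop :=
  ContinuousOn w s ∧ ∀ x ∈ s, w x = a₀ + a₁ * x + j * volterraIntegral g w x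

theorem volterraIntegral_congr {f₁ f₂ : ℝ → ℝ} (h : EqOn f₁ f₂ (uIcc 0 x)) :
    volterraIntegral g f₁ x = volterraIntegral g f₂ x :=
  integral_congr fun t ht => by simp only [h ht]

theorem IsVolterraSolutionOn.mono {w : ℝ → ℝ} {a₀ a₁ j : ℝ} {s t : Set ℝ}
    (h : IsVolterraSolutionOn g a₀ a₁ j s w) (hts : t ⊆ s) :
    IsVolterraSolutionOn g a₀ a₁ j t w :=
  ⟨h.1.mono hts, fun x hx => h.2 x (hts hx)⟩

end Integral

section Interval

variable {g : ℝ → ℝ} {b : ℝ}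

noncomputable def volterraOperator (hb : 0 ≤ b) (hg : IntervalIntegrable g volume 0 b)
    (a₀ a₁ j : ℝ) (w : C(Icc 0 b, ℝ)) : C(Icc 0 b, ℝ) :=
  ⟨(Icc 0 b).domRestrict fun x => a₀ + a₁ * x + j * volterraIntegral g (IccExtend hb w) x,
    ((continuousOn_const.add (continuousOn_const.mul continuousOn_id)).add
      (continuousOn_const.mul (continuousOn_volterraIntegral hb hg
        (continuous_IccExtend_iff.2 w.continuous).continuousOn))).domRestrict⟩

theorem volterraOperator_apply (hb : 0 ≤ b) (hg : IntervalIntegrable g volume 0 b)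
    (a₀ a₁ j : ℝ) (w : C(Icc 0 b, ℝ)) (x : Icc 0 b) :
    volterraOperator hb hg a₀ a₁ j w x =
      a₀ + a₁ * x + j * volterraIntegral g (IccExtend hb w) x :=
  rfl

variable {hb : 0 ≤ b} {hg : IntervalIntegrable g volume 0 b} {a₀ a₁ j : ℝ}

theorem abs_volterraOperator_iterate_sub_le (hgc : ContinuousOn g (Ioo 0 b))
    (w₁ w₂ : C(Icc 0 b, ℝ)) (n : ℕ) (x : Icc 0 b) :
    |(volterraOperator hb hg a₀ a₁ j)^[n] w₁ x - (volterraOperator hb hg a₀ a₁ j)^[n] w₂ x| ≤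
      dist w₁ w₂ * (|j| * b) ^ n * (∫ s in (0 : ℝ)..x, |g s|) ^ n / n.factorial := by
  induction n generalizing x with
  | zero => simpa [← Real.dist_eq] using ContinuousMap.dist_apply_le_dist (f := w₁) (g := w₂) x
  | succ n ih =>
    obtain ⟨x, hx0, hxb⟩ := x
    rw [Function.iterate_succ_apply', Function.iterate_succ_apply']
    set p := (volterraOperator hb hg a₀ a₁ j)^[n] w₁
    set q := (volterraOperator hb hg a₀ a₁ j)^[n] w₂
    have hcont : ∀ w : C(Icc 0 b, ℝ), ContinuousOn (IccExtend hb w) (uIcc 0 x) := fun w =>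
      (continuous_IccExtend_iff.2 w.continuous).continuousOn
    have hgx : IntervalIntegrable g volume 0 x :=
      hg.mono_set (uIcc_subset_uIcc_left (mem_uIcc_of_le hx0 hxb))
    have hpq : ∀ t ∈ Icc 0 x, |(IccExtend hb p - IccExtend hb q) t| ≤
        dist w₁ w₂ * (|j| * b) ^ n * (∫ s in (0 : ℝ)..t, |g s|) ^ n / n.factorial :=
      fun t ht => by
        have htb : t ∈ Icc 0 b := ⟨ht.1, ht.2.trans hxb⟩
        simpa only [Pi.sub_apply, IccExtend_of_mem hb _ htb] using ih ⟨t, htb⟩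
    have hG : 0 ≤ ∫ s in (0 : ℝ)..x, |g s| := integral_nonneg hx0 fun _ _ => abs_nonneg _
    rw [volterraOperator_apply, volterraOperator_apply, add_sub_add_left_eq_sub, ← mul_sub,
      ← volterraIntegral_sub hgx (hcont p) (hcont q), abs_mul]
    calc |j| * |volterraIntegral g (IccExtend hb p - IccExtend hb q) x|
        ≤ |j| * (x * (dist w₁ w₂ * (|j| * b) ^ n) * (∫ s in (0 : ℝ)..x, |g s|) ^ (n + 1) /
            (n + 1).factorial) := by
          gcongr
          exact abs_volterraIntegral_le hx0 hgx (hgc.mono (Ioo_subset_Ioo_right hxb))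
            ((hcont p).sub (hcont q) |>.mono Icc_subset_uIcc) hpq
      _ ≤ |j| * (b * (dist w₁ w₂ * (|j| * b) ^ n) * (∫ s in (0 : ℝ)..x, |g s|) ^ (n + 1) /
            (n + 1).factorial) := by gcongr
      _ = _ := by ring

theorem exists_contractingWith_iterate_volterraOperator (hgc : ContinuousOn g (Ioo 0 b)) :
    ∃ (n : ℕ) (K : NNReal), ContractingWith K (volterraOperator hb hg a₀ a₁ j)^[n] := by
  set c := |j| * b * ∫ s in (0 : ℝ)..b, |g s|
  have hc : 0 ≤ c := mul_nonneg (by positivity) (integral_nonneg hb fun _ _ => abs_nonneg _)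
  obtain ⟨n, hn⟩ : ∃ n : ℕ, c ^ n / n.factorial < 1 :=
    ((FloorSemiring.tendsto_pow_div_factorial_atTop c).eventually (gt_mem_nhds one_pos)).exists
  have hK : 0 ≤ c ^ n / n.factorial := by positivity
  refine ⟨n, ⟨_, hK⟩, hn, LipschitzWith.of_dist_le_mul fun w₁ w₂ =>
    (ContinuousMap.dist_le (by positivity)).2 fun x => ?_⟩
  have hGx : ∫ s in (0 : ℝ)..x, |g s| ≤ ∫ s in (0 : ℝ)..b, |g s| :=
    integral_mono_interval le_rfl x.2.1 x.2.2
      (Filter.Eventually.of_forall fun _ => abs_nonneg _) hg.abs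
  calc dist _ _ ≤ dist w₁ w₂ * (|j| * b) ^ n * (∫ s in (0 : ℝ)..x, |g s|) ^ n / n.factorial :=
        abs_volterraOperator_iterate_sub_le hgc w₁ w₂ n x
    _ ≤ dist w₁ w₂ * (|j| * b) ^ n * (∫ s in (0 : ℝ)..b, |g s|) ^ n / n.factorial := by
        gcongr
        exact integral_nonneg x.2.1 fun _ _ => abs_nonneg _
    _ = c ^ n / n.factorial * dist w₁ w₂ := by simp only [c, mul_pow]; ring

theorem isFixedPt_volterraOperator_domRestrict {w : ℝ → ℝ}
    (h : IsVolterraSolutionOn g a₀ a₁ j (Icc 0 b) w) :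
    Function.IsFixedPt (volterraOperator hb hg a₀ a₁ j)
      ⟨(Icc 0 b).domRestrict w, h.1.domRestrict⟩ := by
  ext ⟨x, hx⟩
  rw [volterraOperator_apply]
  change _ = w x
  rw [h.2 x hx]
  congr 2
  refine volterraIntegral_congr fun t ht => IccExtend_of_mem hb _ ?_
  exact uIcc_subset_Icc (by simp [hb]) hx ht

theorem exists_isVolterraSolutionOn_Icc (hb : 0 ≤ b) (hg : IntervalIntegrable g volume 0 b)
    (hgc : ContinuousOn g (Ioo 0 b)) (a₀ a₁ j : ℝ) :
    ∃ w, IsVolterraSolutionOn g a₀ a₁ j (Icc 0 b) w := by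
  obtain ⟨n, K, hK⟩ :=
    exists_contractingWith_iterate_volterraOperator (hb := hb) (hg := hg) (a₀ := a₀) (a₁ := a₁)
      (j := j) hgc
  have hfix := hK.isFixedPt_fixedPoint_iterate
  refine ⟨IccExtend hb (hK.fixedPoint _),
    (continuous_IccExtend_iff.2 (ContinuousMap.continuous _)).continuousOn, fun x hx => ?_⟩
  rw [IccExtend_of_mem hb _ hx]
  exact (DFunLike.congr_fun hfix ⟨x, hx⟩).symm

theorem IsVolterraSolutionOn.eqOn_Icc (hb : 0 ≤ b) (hg : IntervalIntegrable g volume 0 b)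
    (hgc : ContinuousOn g (Ioo 0 b)) {w₁ w₂ : ℝ → ℝ}
    (h₁ : IsVolterraSolutionOn g a₀ a₁ j (Icc 0 b) w₁)
    (h₂ : IsVolterraSolutionOn g a₀ a₁ j (Icc 0 b) w₂) :
    EqOn w₁ w₂ (Icc 0 b) := fun x hx => by
  obtain ⟨n, K, hK⟩ := exists_contractingWith_iterate_volterraOperator (hb := hb) (hg := hg) hgc
  exact DFunLike.congr_fun (hK.fixedPoint_unique'
    ((isFixedPt_volterraOperator_domRestrict h₁).iterate n)
    ((isFixedPt_volterraOperator_domRestrict h₂).iterate n)) ⟨x, hx⟩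

end Interval

section HalfOpen

variable {g : ℝ → ℝ} {ε a₀ a₁ j : ℝ}

theorem isVolterraSolutionOn_Ico_of_forall_Icc {w : ℝ → ℝ}
    (h : ∀ b ∈ Ioo 0 ε, IsVolterraSolutionOn g a₀ a₁ j (Icc 0 b) w) :
    IsVolterraSolutionOn g a₀ a₁ j (Ico 0 ε) w := by
  have hlocal : ∀ x ∈ Ico 0 ε, ∃ b, x < b ∧ IsVolterraSolutionOn g a₀ a₁ j (Icc 0 b) w :=
    fun x hx => by
      obtain ⟨b, hxb, hbε⟩ := exists_between hx.2
      exact ⟨b, hxb, h b ⟨hx.1.trans_lt hxb, hbε⟩⟩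
  refine ⟨fun x hx => ?_, fun x hx => ?_⟩
  · obtain ⟨b, hxb, hw⟩ := hlocal x hx
    have hnhds : Icc 0 b ∈ nhdsWithin x (Ico 0 ε) :=
      mem_nhdsWithin.2 ⟨Iio b, isOpen_Iio, hxb, fun y hy => ⟨hy.2.1, le_of_lt hy.1⟩⟩
    exact (hw.1 x ⟨hx.1, hxb.le⟩).mono_of_mem_nhdsWithin hnhds
  · obtain ⟨b, hxb, hw⟩ := hlocal x hx
    exact hw.2 x ⟨hx.1, hxb.le⟩

theorem IsVolterraSolutionOn.eqOn_Icc_of_mem_Ioo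
    (hg : ∀ b ∈ Ioo 0 ε, IntervalIntegrable g volume 0 b) (hgc : ContinuousOn g (Ioo 0 ε))
    {b : ℝ} (hb : b ∈ Ioo 0 ε) {w₁ w₂ : ℝ → ℝ}
    (h₁ : IsVolterraSolutionOn g a₀ a₁ j (Icc 0 b) w₁)
    (h₂ : IsVolterraSolutionOn g a₀ a₁ j (Icc 0 b) w₂) :
    EqOn w₁ w₂ (Icc 0 b) :=
  h₁.eqOn_Icc hb.1.le (hg b hb) (hgc.mono (Ioo_subset_Ioo_right hb.2.le)) h₂

theorem IsVolterraSolutionOn.eqOn_Ico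
    (hg : ∀ b ∈ Ioo 0 ε, IntervalIntegrable g volume 0 b) (hgc : ContinuousOn g (Ioo 0 ε))
    {w₁ w₂ : ℝ → ℝ} (h₁ : IsVolterraSolutionOn g a₀ a₁ j (Ico 0 ε) w₁)
    (h₂ : IsVolterraSolutionOn g a₀ a₁ j (Ico 0 ε) w₂) :
    EqOn w₁ w₂ (Ico 0 ε) := fun x hx => by
  obtain ⟨b, hxb, hbε⟩ := exists_between hx.2
  have hsub : Icc 0 b ⊆ Ico 0 ε := Icc_subset_Ico_right hbε
  exact (h₁.mono hsub).eqOn_Icc_of_mem_Ioo hg hgc ⟨hx.1.trans_lt hxb, hbε⟩ (h₂.mono hsub)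
    ⟨hx.1, hxb.le⟩

theorem exists_isVolterraSolutionOn_Ico
    (hg : ∀ b ∈ Ioo 0 ε, IntervalIntegrable g volume 0 b) (hgc : ContinuousOn g (Ioo 0 ε))
    (a₀ a₁ j : ℝ) : ∃ w, IsVolterraSolutionOn g a₀ a₁ j (Ico 0 ε) w := by
  have hlocal : ∀ b, ∃ w, b ∈ Ioo 0 ε → IsVolterraSolutionOn g a₀ a₁ j (Icc 0 b) w := fun b =>
    if hb : b ∈ Ioo 0 ε then
      (exists_isVolterraSolutionOn_Icc hb.1.le (hg b hb)
        (hgc.mono (Ioo_subset_Ioo_right hb.2.le)) a₀ a₁ j).imp fun _ h _ => h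
    else ⟨0, fun h => absurd h hb⟩
  choose sol hsol using hlocal
  have hglue : ∀ b ∈ Ioo 0 ε, EqOn (fun x => sol ((x + ε) / 2) x) (sol b) (Icc 0 b) :=
    fun b hb x hx => by
      have hxε : x < ε := hx.2.trans_lt hb.2
      have hxm : x < (x + ε) / 2 := by linarith
      have hm : (x + ε) / 2 ∈ Ioo 0 ε := ⟨hx.1.trans_lt hxm, by linarith⟩
      have hmin : min ((x + ε) / 2) b ∈ Ioo 0 ε :=
        ⟨lt_min hm.1 hb.1, (min_le_right _ _).trans_lt hb.2⟩
      exact ((hsol _ hm).mono (Icc_subset_Icc_right (min_le_left _ _))).eqOn_Icc_of_mem_Ioo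
        hg hgc hmin ((hsol b hb).mono (Icc_subset_Icc_right (min_le_right _ _)))
        ⟨hx.1, le_min hxm.le hx.2⟩
  refine ⟨fun x => sol ((x + ε) / 2) x,
    isVolterraSolutionOn_Ico_of_forall_Icc fun b hb => ⟨?_, fun x hx => ?_⟩⟩
  · exact (hsol b hb).1.congr (hglue b hb)
  · rw [hglue b hb hx, (hsol b hb).2 x hx, volterraIntegral_congr fun t ht =>
      (hglue b hb (uIcc_subset_Icc (by simp [hb.1.le]) hx ht)).symm]

end HalfOpen

theorem stmt_6_general (ε j α β : ℝ)
    (D : ℝ → ℝ)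
    (hDc : ContinuousOn D (Ioo 0 ε)) (hDpos : ∀ x ∈ Ioo 0 ε, 0 < D x)
    (hint : ∀ δ ∈ Ioo 0 ε,
      IntegrableOn (fun s => 1 / Real.sqrt (D s)) (Ioc 0 δ) volume) :
    ∃ u v : ℝ → ℝ,
      (ContinuousOn u (Ico 0 ε) ∧ ContinuousOn v (Ico 0 ε) ∧
        (∀ x ∈ Ico 0 ε,
          u x = 1 + α * x + j * ∫ s in (0 : ℝ)..x, (x - s) * u s / Real.sqrt (D s)) ∧
        (∀ x ∈ Ico 0 ε,
          v x = β * x + j * ∫ s in (0 : ℝ)..x, (x - s) * v s / Real.sqrt (D s))) ∧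
      (∀ u₂ v₂ : ℝ → ℝ,
        (ContinuousOn u₂ (Ico 0 ε) ∧ ContinuousOn v₂ (Ico 0 ε) ∧
          (∀ x ∈ Ico 0 ε,
            u₂ x = 1 + α * x + j * ∫ s in (0 : ℝ)..x, (x - s) * u₂ s / Real.sqrt (D s)) ∧
          (∀ x ∈ Ico 0 ε,
            v₂ x = β * x + j * ∫ s in (0 : ℝ)..x, (x - s) * v₂ s / Real.sqrt (D s))) →
        ∀ x ∈ Ico 0 ε, u₂ x = u x ∧ v₂ x = v x) := by
  set g := fun s => 1 / Real.sqrt (D s)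
  have hg : ∀ δ ∈ Ioo 0 ε, IntervalIntegrable g volume 0 δ := fun δ hδ =>
    (intervalIntegrable_iff_integrableOn_Ioc_of_le hδ.1.le).2 (hint δ hδ)
  have hgc : ContinuousOn g (Ioo 0 ε) :=
    continuousOn_const.div hDc.sqrt fun x hx => (Real.sqrt_pos.2 (hDpos x hx)).ne'
  have hV : ∀ w x, volterraIntegral g w x = ∫ s in (0 : ℝ)..x, (x - s) * w s / Real.sqrt (D s) :=
    fun w x => by simp only [volterraIntegral, g, mul_one_div]
  obtain ⟨u, hu⟩ := exists_isVolterraSolutionOn_Ico hg hgc 1 α j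
  obtain ⟨v, hv⟩ := exists_isVolterraSolutionOn_Ico hg hgc 0 β j
  refine ⟨u, v, ⟨hu.1, hv.1, fun x hx => by rw [hu.2 x hx, hV],
    fun x hx => by rw [hv.2 x hx, hV, zero_add]⟩, ?_⟩
  rintro u₂ v₂ ⟨hu₂c, hv₂c, hu₂, hv₂⟩ x hx
  exact ⟨IsVolterraSolutionOn.eqOn_Ico hg hgc ⟨hu₂c, fun y hy => by rw [hu₂ y hy, hV]⟩ hu hx,
    IsVolterraSolutionOn.eqOn_Ico hg hgc ⟨hv₂c, fun y hy => by rw [hv₂ y hy, hV, zero_add]⟩ hv hx⟩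

theorem stmt_6 (ε j α β : ℝ) (hε : 0 < ε) (hj : 0 < j)
    (D : ℝ → ℝ)
    (hDc : ContinuousOn D (Ioo 0 ε)) (hDpos : ∀ x ∈ Ioo 0 ε, 0 < D x)
    (hint : ∀ δ ∈ Ioo 0 ε,
      IntegrableOn (fun s => 1 / Real.sqrt (D s)) (Ioc 0 δ) volume) :
    ∃ u v : ℝ → ℝ,
      (ContinuousOn u (Ico 0 ε) ∧ ContinuousOn v (Ico 0 ε) ∧
        (∀ x ∈ Ico 0 ε,
          u x = 1 + α * x + j * ∫ s in (0 : ℝ)..x, (x - s) * u s / Real.sqrt (D s)) ∧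
        (∀ x ∈ Ico 0 ε,
          v x = β * x + j * ∫ s in (0 : ℝ)..x, (x - s) * v s / Real.sqrt (D s))) ∧
      (∀ u₂ v₂ : ℝ → ℝ,
        (ContinuousOn u₂ (Ico 0 ε) ∧ ContinuousOn v₂ (Ico 0 ε) ∧
          (∀ x ∈ Ico 0 ε,
            u₂ x = 1 + α * x + j * ∫ s in (0 : ℝ)..x, (x - s) * u₂ s / Real.sqrt (D s)) ∧
          (∀ x ∈ Ico 0 ε,
            v₂ x = β * x + j * ∫ s in (0 : ℝ)..x, (x - s) * v₂ s / Real.sqrt (D s))) →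
        ∀ x ∈ Ico 0 ε, u₂ x = u x ∧ v₂ x = v x) :=
  stmt_6_general ε j α β D hDc hDpos hint
end

section
/- Suppose D ∈ C¹[0,ε) ∩ C²(0,ε) is positive on (0,ε) with D(0) = D'(0) = 0 and satisfies D'' = j(6√D + 2/√D − 4γ), and suppose (U,V) ∈ (C¹[0,ε) ∩ C²(0,ε))² solves U'' = j·U/√D, U(0)=1, U'(0)=0, V'' = j·V/√D, V(0)=0, V'(0)=β with β² = 2jγ. Then U² − 1 − V² = D on [0,ε). -/
/-!
Put `w = U² - 1 - V² - D`, `p = w'` and `Q = U'² - V'² + 2jγ - 2j√D`. Using the three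
differential equations one finds the linear system `w' = p`, `p' = 2Q + 2jw/√D`, `Q' = jp/√D`,
with zero initial data because `β² = 2jγ`. The energy `E = w² + p² + Q²` then satisfies
`E' ≤ 3(1 + j/√D) E`, and Gronwall's inequality with the coefficient `1/√D` forces `E = 0`.
That coefficient is integrable at `0` since `2j/√D = (D' + 4jγx)' - 6j√D`, where
`D' + 4jγx` is continuous and nondecreasing on `[0, ε)`.
-/

open Set MeasureTheory Real

theorem le_mul_exp_integral_of_hasDerivAt_le_mul {f f' g : ℝ → ℝ} {a b : ℝ} (hab : a ≤ b)
    (hf : ContinuousOn f (Icc a b)) (hf' : ∀ x ∈ Ioo a b, HasDerivAt f (f' x) x)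
    (hg : IntervalIntegrable g volume a b) (hgc : ContinuousOn g (Ioo a b))
    (hle : ∀ x ∈ Ioo a b, f' x ≤ g x * f x) :
    f b ≤ f a * exp (∫ t in a..b, g t) := by
  set G : ℝ → ℝ := fun x => ∫ t in a..x, g t with hG
  have hGc : ContinuousOn G (Icc a b) := by
    simpa [uIcc_of_le hab] using intervalIntegral.continuousOn_primitive_interval' hg left_mem_uIcc
  have hG' : ∀ x ∈ Ioo a b, HasDerivAt G (g x) x := fun x hx =>
    intervalIntegral.integral_hasDerivAt_right
      (hg.mono_set (uIcc_subset_uIcc_left (by rw [uIcc_of_le hab]; exact Ioo_subset_Icc_self hx)))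
      (hgc.stronglyMeasurableAtFilter isOpen_Ioo x hx) (hgc.continuousAt (Ioo_mem_nhds hx.1 hx.2))
  have hanti : AntitoneOn (fun x => f x * exp (-G x)) (Icc a b) := by
    refine antitoneOn_of_hasDerivWithinAt_nonpos (convex_Icc a b)
      (hf.mul (hGc.neg.rexp)) (fun x hx => ?_) (fun x hx => ?_)
      (f' := fun x => (f' x - g x * f x) * exp (-G x))
    · rw [interior_Icc] at hx
      have hd : HasDerivAt (fun y => f y * exp (-G y))
          (f' x * exp (-G x) + f x * (exp (-G x) * -g x)) x :=
        (hf' x hx).mul (hG' x hx).neg.exp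
      exact (hd.congr_deriv (by ring)).hasDerivWithinAt
    · rw [interior_Icc] at hx
      exact mul_nonpos_of_nonpos_of_nonneg (sub_nonpos.2 (hle x hx)) (exp_pos _).le
  have hba := hanti ⟨le_rfl, hab⟩ ⟨hab, le_rfl⟩ hab
  simp only [hG, intervalIntegral.integral_same, neg_zero, exp_zero, mul_one] at hba
  rwa [exp_neg, ← div_eq_mul_inv, div_le_iff₀ (exp_pos _)] at hba

theorem eq_zero_of_linear_system {j a b : ℝ} {w p Q k : ℝ → ℝ} (hab : a ≤ b) (hj : 0 ≤ j)
    (hk : ∀ t ∈ Ioo a b, 0 ≤ k t) (hkc : ContinuousOn k (Ioo a b))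
    (hki : IntervalIntegrable k volume a b)
    (hw : ContinuousOn w (Icc a b)) (hp : ContinuousOn p (Icc a b))
    (hQ : ContinuousOn Q (Icc a b))
    (hw' : ∀ t ∈ Ioo a b, HasDerivAt w (p t) t)
    (hp' : ∀ t ∈ Ioo a b, HasDerivAt p (2 * Q t + 2 * j * w t * k t) t)
    (hQ' : ∀ t ∈ Ioo a b, HasDerivAt Q (j * p t * k t) t)
    (hwa : w a = 0) (hpa : p a = 0) (hQa : Q a = 0) : w b = 0 := by
  have henergy := le_mul_exp_integral_of_hasDerivAt_le_mul hab
    (f := fun t => w t ^ 2 + p t ^ 2 + Q t ^ 2) (g := fun t => 3 + 3 * j * k t)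
    ((hw.pow 2).add (hp.pow 2) |>.add (hQ.pow 2))
    (fun t ht => ((hw' t ht).pow 2).add ((hp' t ht).pow 2) |>.add ((hQ' t ht).pow 2))
    (intervalIntegrable_const.add (hki.const_mul _))
    (continuousOn_const.add (continuousOn_const.mul hkc)) fun t ht => by
      have hjk := mul_nonneg hj (hk t ht)
      push_cast
      nlinarith [sq_nonneg (w t - p t), sq_nonneg (p t - Q t), sq_nonneg (w t), sq_nonneg (Q t),
        mul_nonneg hjk (sq_nonneg (w t - p t)), mul_nonneg hjk (sq_nonneg (p t - Q t)),
        mul_nonneg hjk (sq_nonneg (w t)), mul_nonneg hjk (sq_nonneg (Q t))]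
  simp only [hwa, hpa, hQa] at henergy
  nlinarith [sq_nonneg (p b), sq_nonneg (Q b)]

theorem intervalIntegrable_inv_sqrt {j γ x : ℝ} {D D' : ℝ → ℝ} (hj : 0 < j) (hx : 0 ≤ x)
    (hD : ContinuousOn D (Icc 0 x)) (hD' : ContinuousOn D' (Icc 0 x))
    (hD'' : ∀ y ∈ Ioo 0 x, HasDerivAt D' (j * (6 * √(D y) + 2 / √(D y) - 4 * γ)) y) :
    IntervalIntegrable (fun t => (√(D t))⁻¹) volume 0 x := by
  have hint : IntervalIntegrable (fun t => j * (6 * √(D t) + 2 / √(D t) - 4 * γ) + 4 * j * γ)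
      volume 0 x := by
    refine intervalIntegral.intervalIntegrable_deriv_of_nonneg (g := fun t => D' t + 4 * j * γ * t)
      ?_ ?_ ?_
    · rw [uIcc_of_le hx]; exact hD'.add (continuousOn_const.mul continuousOn_id)
    · intro y hy
      rw [min_eq_left hx, max_eq_right hx] at hy
      have hd : HasDerivAt (fun t => D' t + 4 * j * γ * id t)
          (j * (6 * √(D y) + 2 / √(D y) - 4 * γ) + 4 * j * γ * 1) y :=
        (hD'' y hy).add ((hasDerivAt_id y).const_mul (4 * j * γ))
      simpa using hd
    · intro y _
      have : 0 ≤ √(D y) := sqrt_nonneg _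
      have : 0 ≤ 2 / √(D y) := by positivity
      nlinarith
  have hsqrt : IntervalIntegrable (fun t => √(D t)) volume 0 x :=
    (continuous_sqrt.comp_continuousOn hD).intervalIntegrable_of_Icc hx
  convert (hint.sub (hsqrt.const_mul (6 * j))).div_const (2 * j) using 1
  ext t
  have := mul_self_mul_inv √(D t)
  field_simp
  linear_combination -6 * this

def gap (U V D : ℝ → ℝ) (t : ℝ) : ℝ := U t ^ 2 - 1 - V t ^ 2 - D t

def gapDeriv (U U' V V' D' : ℝ → ℝ) (t : ℝ) : ℝ := 2 * U t * U' t - 2 * V t * V' t - D' t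

noncomputable def gapFlux (j γ : ℝ) (U' V' D : ℝ → ℝ) (t : ℝ) : ℝ :=
  U' t ^ 2 - V' t ^ 2 + 2 * j * γ - 2 * j * √(D t)

section Derivatives

variable {j γ y : ℝ} {D D' U U' V V' : ℝ → ℝ}

theorem hasDerivAt_gap (hD : HasDerivAt D (D' y) y) (hU : HasDerivAt U (U' y) y)
    (hV : HasDerivAt V (V' y) y) : HasDerivAt (gap U V D) (gapDeriv U U' V V' D' y) y := by
  have h := (((hU.pow 2).sub_const 1).sub (hV.pow 2)).sub hD
  exact h.congr_deriv (by simp only [gapDeriv]; ring)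

theorem hasDerivAt_gapDeriv (hDy : 0 < D y) (hU : HasDerivAt U (U' y) y)
    (hV : HasDerivAt V (V' y) y)
    (hD'' : HasDerivAt D' (j * (6 * √(D y) + 2 / √(D y) - 4 * γ)) y)
    (hU'' : HasDerivAt U' (j * U y / √(D y)) y) (hV'' : HasDerivAt V' (j * V y / √(D y)) y) :
    HasDerivAt (gapDeriv U U' V V' D')
      (2 * gapFlux j γ U' V' D y + 2 * j * gap U V D y * (√(D y))⁻¹) y := by
  have h := (((hU.const_mul 2).mul hU'').sub ((hV.const_mul 2).mul hV'')).sub hD''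
  have hs : 0 < √(D y) := sqrt_pos.2 hDy
  have hss : √(D y) ^ 2 = D y := sq_sqrt hDy.le
  refine h.congr_deriv ?_
  simp only [gapFlux, gap]
  field_simp
  linear_combination (-2 * j) * hss

theorem hasDerivAt_gapFlux (hDy : 0 < D y) (hD : HasDerivAt D (D' y) y)
    (hU'' : HasDerivAt U' (j * U y / √(D y)) y) (hV'' : HasDerivAt V' (j * V y / √(D y)) y) :
    HasDerivAt (gapFlux j γ U' V' D)
      (j * gapDeriv U U' V V' D' y * (√(D y))⁻¹) y := by
  have h := (((hU''.pow 2).sub (hV''.pow 2)).add_const (2 * j * γ)).sub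
    ((hD.sqrt hDy.ne').const_mul (2 * j))
  have hs : 0 < √(D y) := sqrt_pos.2 hDy
  refine h.congr_deriv ?_
  simp only [gapDeriv]
  field_simp
  ring

end Derivatives

theorem stmt_7_general (ε j γ β : ℝ) (hj : 0 < j)
    (hβ : β ^ 2 = 2 * j * γ)
    (D D' U U' V V' : ℝ → ℝ)
    (hD' : ∀ x ∈ Ico 0 ε, HasDerivWithinAt D (D' x) (Ico 0 ε) x)
    (hD'c : ContinuousOn D' (Ico 0 ε))
    (hDpos : ∀ x ∈ Ioo 0 ε, 0 < D x)
    (hD0 : D 0 = 0) (hD'0 : D' 0 = 0)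
    (hD'' : ∀ x ∈ Ioo 0 ε,
      HasDerivAt D' (j * (6 * Real.sqrt (D x) + 2 / Real.sqrt (D x) - 4 * γ)) x)
    (hU' : ∀ x ∈ Ico 0 ε, HasDerivWithinAt U (U' x) (Ico 0 ε) x)
    (hU'c : ContinuousOn U' (Ico 0 ε))
    (hU'' : ∀ x ∈ Ioo 0 ε, HasDerivAt U' (j * U x / Real.sqrt (D x)) x)
    (hV' : ∀ x ∈ Ico 0 ε, HasDerivWithinAt V (V' x) (Ico 0 ε) x)
    (hV'c : ContinuousOn V' (Ico 0 ε))
    (hV'' : ∀ x ∈ Ioo 0 ε, HasDerivAt V' (j * V x / Real.sqrt (D x)) x)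
    (hU0 : U 0 = 1) (hU'0 : U' 0 = 0) (hV0 : V 0 = 0) (hV'0 : V' 0 = β) :
    ∀ x ∈ Ico 0 ε, U x ^ 2 - 1 - V x ^ 2 = D x := by
  intro x hx
  have hsub : Icc 0 x ⊆ Ico 0 ε := Icc_subset_Ico_right hx.2
  have hIoo : Ioo 0 x ⊆ Ioo 0 ε := Ioo_subset_Ioo_right hx.2.le
  have hderiv : ∀ {f f' : ℝ → ℝ}, (∀ x ∈ Ico 0 ε, HasDerivWithinAt f (f' x) (Ico 0 ε) x) →
      ∀ y ∈ Ioo 0 x, HasDerivAt f (f' y) y := fun hf y hy =>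
    (hf y (Ioo_subset_Ico_self (hIoo hy))).hasDerivAt (Ico_mem_nhds (hIoo hy).1 (hIoo hy).2)
  have hcont : ∀ {f f' : ℝ → ℝ}, (∀ x ∈ Ico 0 ε, HasDerivWithinAt f (f' x) (Ico 0 ε) x) →
      ContinuousOn f (Icc 0 x) := fun hf y hy => (hf y (hsub hy)).continuousWithinAt.mono hsub
  have hDc := hcont hD'
  have hUc := hcont hU'
  have hVc := hcont hV'
  have hD'c := hD'c.mono hsub
  have hU'c := hU'c.mono hsub
  have hV'c := hV'c.mono hsub
  have hgap := eq_zero_of_linear_system hx.1 hj.le (k := fun t => (√(D t))⁻¹)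
    (fun _ _ => inv_nonneg.2 (sqrt_nonneg _))
    ((continuous_sqrt.comp_continuousOn (hDc.mono Ioo_subset_Icc_self)).inv₀
      fun y hy => (sqrt_pos.2 (hDpos y (hIoo hy))).ne')
    (intervalIntegrable_inv_sqrt hj hx.1 hDc hD'c fun y hy => hD'' y (hIoo hy))
    (by unfold gap; fun_prop) (by unfold gapDeriv; fun_prop) (by unfold gapFlux; fun_prop)
    (fun y hy => hasDerivAt_gap (hderiv hD' y hy) (hderiv hU' y hy) (hderiv hV' y hy))
    (fun y hy => hasDerivAt_gapDeriv (hDpos y (hIoo hy)) (hderiv hU' y hy)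
      (hderiv hV' y hy) (hD'' y (hIoo hy)) (hU'' y (hIoo hy)) (hV'' y (hIoo hy)))
    (fun y hy => hasDerivAt_gapFlux (hDpos y (hIoo hy)) (hderiv hD' y hy)
      (hU'' y (hIoo hy)) (hV'' y (hIoo hy)))
    (by simp [gap, hU0, hV0, hD0]) (by simp [gapDeriv, hV0, hU'0, hD'0])
    (by simp [gapFlux, hU'0, hV'0, hD0, hβ])
  simp only [gap] at hgap
  linarith

theorem stmt_7 (ε j γ β : ℝ) (hε : 0 < ε) (hj : 0 < j) (hγ : 0 ≤ γ)
    (hβ : β ^ 2 = 2 * j * γ)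
    (D D' U U' V V' : ℝ → ℝ)
    (hD' : ∀ x ∈ Ico 0 ε, HasDerivWithinAt D (D' x) (Ico 0 ε) x)
    (hD'c : ContinuousOn D' (Ico 0 ε))
    (hDpos : ∀ x ∈ Ioo 0 ε, 0 < D x)
    (hD0 : D 0 = 0) (hD'0 : D' 0 = 0)
    (hD'' : ∀ x ∈ Ioo 0 ε,
      HasDerivAt D' (j * (6 * Real.sqrt (D x) + 2 / Real.sqrt (D x) - 4 * γ)) x)
    (hU' : ∀ x ∈ Ico 0 ε, HasDerivWithinAt U (U' x) (Ico 0 ε) x)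
    (hU'c : ContinuousOn U' (Ico 0 ε))
    (hU'' : ∀ x ∈ Ioo 0 ε, HasDerivAt U' (j * U x / Real.sqrt (D x)) x)
    (hV' : ∀ x ∈ Ico 0 ε, HasDerivWithinAt V (V' x) (Ico 0 ε) x)
    (hV'c : ContinuousOn V' (Ico 0 ε))
    (hV'' : ∀ x ∈ Ioo 0 ε, HasDerivAt V' (j * V x / Real.sqrt (D x)) x)
    (hU0 : U 0 = 1) (hU'0 : U' 0 = 0) (hV0 : V 0 = 0) (hV'0 : V' 0 = β) :
    ∀ x ∈ Ico 0 ε, U x ^ 2 - 1 - V x ^ 2 = D x :=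
  stmt_7_general ε j γ β hj hβ D D' U U' V V' hD' hD'c hDpos hD0 hD'0 hD'' hU' hU'c hU'' hV' hV'c
    hV'' hU0 hU'0 hV0 hV'0
end

section
/- Let k̂, β̂ ∈ ℝ with k̂² > 3, set U = k̂/(2√(k̂² − 3)) and V = (2k̂³ − 9k̂ + 27β̂)/(−2(k̂² − 3)^{3/2}). If |U| ≤ 1, |V| ≤ 1, Δ = 18k̂β̂ + k̂² − 4 − 4k̂³β̂ − 27β̂² > 0, and arccos(U) = (1/3)arccos(V), then β̂ = 0 and k̂² ≥ 4. -/
/-! With `s = √(k² - 3)`, `cos (3θ) = 4 cos³ θ - 3 cos θ` turns the arccos relation into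
`4U³ - 3U = V`, and a direct computation using `s² = k² - 3` gives `4U³ - 3U - V = 27b / (2s³)`,
so `b = 0`. The bound `k² ≥ 4` is `|k| ≤ 2s` squared. -/

open Real

theorem four_mul_pow_three_sub_three_mul_eq_of_arccos_eq {U V : ℝ} (hU : |U| ≤ 1) (hV : |V| ≤ 1)
    (h : arccos U = 1 / 3 * arccos V) : 4 * U ^ 3 - 3 * U = V := by
  obtain ⟨hU₁, hU₂⟩ := abs_le.mp hU
  obtain ⟨hV₁, hV₂⟩ := abs_le.mp hV
  have h3 : arccos V = 3 * arccos U := by linarith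
  rw [← cos_arccos hV₁ hV₂, h3, cos_three_mul, cos_arccos hU₁ hU₂]

theorem four_mul_pow_three_sub_three_mul_sub_eq {k b s : ℝ} (hs : s ≠ 0) (hs2 : s ^ 2 = k ^ 2 - 3) :
    4 * (k / (2 * s)) ^ 3 - 3 * (k / (2 * s)) - (2 * k ^ 3 - 9 * k + 27 * b) / (-2 * s ^ 3) =
      27 * b / (2 * s ^ 3) := by
  field_simp
  linear_combination (-12 * k) * hs2

theorem four_le_sq_of_abs_div_le_one {k s : ℝ} (hs : 0 < s) (hs2 : s ^ 2 = k ^ 2 - 3)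
    (h : |k / (2 * s)| ≤ 1) : 4 ≤ k ^ 2 := by
  rw [abs_div, abs_of_pos (by positivity : 0 < 2 * s), div_le_one (by positivity)] at h
  nlinarith [sq_abs k, abs_nonneg k]

theorem stmt_14_general (k b U V : ℝ) (hk : 3 < k ^ 2)
    (hU : U = k / (2 * Real.sqrt (k ^ 2 - 3)))
    (hV : V = (2 * k ^ 3 - 9 * k + 27 * b) / (-2 * Real.sqrt (k ^ 2 - 3) ^ 3))
    (hU1 : |U| ≤ 1) (hV1 : |V| ≤ 1)
    (harc : Real.arccos U = (1 / 3) * Real.arccos V) :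
    b = 0 ∧ 4 ≤ k ^ 2 := by
  set s := Real.sqrt (k ^ 2 - 3)
  have hs : 0 < s := Real.sqrt_pos.mpr (by linarith)
  have hs2 : s ^ 2 = k ^ 2 - 3 := Real.sq_sqrt (by linarith)
  have hcubic := four_mul_pow_three_sub_three_mul_eq_of_arccos_eq hU1 hV1 harc
  rw [← sub_eq_zero, hU, hV, four_mul_pow_three_sub_three_mul_sub_eq hs.ne' hs2] at hcubic
  refine ⟨?_, four_le_sq_of_abs_div_le_one hs hs2 (hU ▸ hU1)⟩
  simpa [hs.ne'] using hcubic

theorem stmt_14 (k b U V : ℝ) (hk : 3 < k ^ 2)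
    (hU : U = k / (2 * Real.sqrt (k ^ 2 - 3)))
    (hV : V = (2 * k ^ 3 - 9 * k + 27 * b) / (-2 * Real.sqrt (k ^ 2 - 3) ^ 3))
    (hU1 : |U| ≤ 1) (hV1 : |V| ≤ 1)
    (hΔ : 0 < 18 * k * b + k ^ 2 - 4 - 4 * k ^ 3 * b - 27 * b ^ 2)
    (harc : Real.arccos U = (1 / 3) * Real.arccos V) :
    b = 0 ∧ 4 ≤ k ^ 2 :=
  stmt_14_general k b U V hk hU hV hU1 hV1 harc
end
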